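/- arXiv:1103.4825 — 6 statements merged into one kernel-verified Lean document; each statement's English description precedes it below -/
import Mathlib

section
/- Let 𝒮 be a block algebra of dimension s² (isomorphic to Mat_s(ℂ)). For every X ∈ Mat_{k×ℓ}(𝒮), one has (1/s)‖X‖² ≤ Σ_{i=1}^k Σ_{j=1}^ℓ ‖X(i,j)‖² ≤ s·min(k,ℓ)·‖X‖², where ‖X‖ is the C*-norm of X regarded as a matrix over 𝒮 and ‖X(i,j)‖ the C*-norm of each entry. -/
/-!
Both bounds go through the Hilbert–Schmidt sum `∑ |X p q|²` of a matrix: it dominates `‖X‖²`,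
and it is at most `min (#rows) (#columns) · ‖X‖²` because every row and every column of `X` has
Euclidean length at most `‖X‖`. The Hilbert–Schmidt sum of `X` is the sum of those of its
`s × s` blocks, so applying both facts to `X` and to each block gives the two inequalities.
-/

open scoped Matrix.Norms.L2Operator

/-- Operator norm (largest singular value) of a rectangular complex matrix. -/
noncomputable def matOpNorm {m n : Type*} [Fintype m] [Fintype n] [DecidableEq n]
    (X : Matrix m n ℂ) : ℝ :=
  ‖LinearMap.toContinuousLinearMap (Matrix.toEuclideanLin X)‖

lemma matOpNorm_eq_l2_opNorm {m n : Type*} [Fintype m] [Fintype n] [DecidableEq n]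
    (X : Matrix m n ℂ) : matOpNorm X = ‖X‖ := rfl

namespace Matrix

variable {𝕜 m n : Type*} [RCLike 𝕜] [Fintype m] [Fintype n]

lemma norm_dotProduct_sq_le (v w : n → 𝕜) :
    ‖v ⬝ᵥ w‖ ^ 2 ≤ (∑ j, ‖v j‖ ^ 2) * ∑ j, ‖w j‖ ^ 2 :=
  calc ‖v ⬝ᵥ w‖ ^ 2 ≤ (∑ j, ‖v j‖ * ‖w j‖) ^ 2 := by
        gcongr
        simpa only [dotProduct, norm_mul] using norm_sum_le Finset.univ fun j => v j * w j
    _ ≤ _ := Finset.sum_mul_sq_le_sq_mul_sq _ _ _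

variable [DecidableEq n]

lemma sum_norm_sq_col_le_l2_opNorm_sq (A : Matrix m n 𝕜) (j : n) :
    ∑ i, ‖A i j‖ ^ 2 ≤ ‖A‖ ^ 2 := by
  have h := A.l2_opNorm_mulVec (EuclideanSpace.single j 1)
  rw [PiLp.norm_single, norm_one, mul_one] at h
  have hcol : (EuclideanSpace.equiv m 𝕜).symm (A *ᵥ EuclideanSpace.single j 1) =
      WithLp.toLp 2 fun i => A i j := by
    ext i
    simp [EuclideanSpace.single, mulVec_single]
  rw [hcol] at h
  simpa only [EuclideanSpace.norm_sq_eq] using pow_le_pow_left₀ (norm_nonneg _) h 2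

lemma l2_opNorm_sq_le_sum_norm_sq (A : Matrix m n 𝕜) :
    ‖A‖ ^ 2 ≤ ∑ i, ∑ j, ‖A i j‖ ^ 2 := by
  rw [← Real.le_sqrt (norm_nonneg _) (by positivity)]
  refine ContinuousLinearMap.opNorm_le_bound _ (Real.sqrt_nonneg _) fun x => ?_
  rw [← Real.sqrt_sq (norm_nonneg x), ← Real.sqrt_mul (by positivity),
    Real.le_sqrt (norm_nonneg _) (by positivity), EuclideanSpace.norm_sq_eq,
    EuclideanSpace.norm_sq_eq, Finset.sum_mul]
  exact Finset.sum_le_sum fun i _ => norm_dotProduct_sq_le (A i) x.ofLp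

lemma sum_norm_sq_row_le_l2_opNorm_sq [DecidableEq m] (A : Matrix m n 𝕜) (i : m) :
    ∑ j, ‖A i j‖ ^ 2 ≤ ‖A‖ ^ 2 := by
  simpa [conjTranspose_apply, l2_opNorm_conjTranspose] using
    sum_norm_sq_col_le_l2_opNorm_sq Aᴴ i

lemma sum_norm_sq_le_min_card_mul_l2_opNorm_sq [DecidableEq m] (A : Matrix m n 𝕜) :
    ∑ i, ∑ j, ‖A i j‖ ^ 2 ≤ (min (Fintype.card m) (Fintype.card n) : ℕ) * ‖A‖ ^ 2 := by
  rw [Nat.cast_min, min_mul_of_nonneg _ _ (by positivity)]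
  refine le_min ?_ ?_
  · simpa using Finset.sum_le_sum fun i (_ : i ∈ Finset.univ) =>
      sum_norm_sq_row_le_l2_opNorm_sq A i
  · rw [Finset.sum_comm]
    simpa using Finset.sum_le_sum fun j (_ : j ∈ Finset.univ) =>
      sum_norm_sq_col_le_l2_opNorm_sq A j

end Matrix

lemma Fintype.sum_prod_type_sum_prod_type {ι α κ β M : Type*} [Fintype ι] [Fintype α]
    [Fintype κ] [Fintype β] [AddCommMonoid M] (f : ι × α → κ × β → M) :
    ∑ p, ∑ q, f p q = ∑ i, ∑ j, ∑ a, ∑ b, f (i, a) (j, b) := by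
  simp only [Fintype.sum_prod_type]
  exact Finset.sum_congr rfl fun i _ => Finset.sum_comm

theorem block_hilbert_schmidt_comparison_general (s k ℓ : ℕ)
    (X : Matrix (Fin k × Fin s) (Fin ℓ × Fin s) ℂ) :
    (1 / (s : ℝ)) * matOpNorm X ^ 2 ≤
      (∑ i : Fin k, ∑ j : Fin ℓ,
        matOpNorm (Matrix.of fun a b : Fin s => X (i, a) (j, b)) ^ 2) ∧
    (∑ i : Fin k, ∑ j : Fin ℓ,
        matOpNorm (Matrix.of fun a b : Fin s => X (i, a) (j, b)) ^ 2) ≤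
      (s : ℝ) * (min k ℓ : ℕ) * matOpNorm X ^ 2 := by
  simp only [matOpNorm_eq_l2_opNorm]
  set B : Fin k → Fin ℓ → Matrix (Fin s) (Fin s) ℂ :=
    fun i j => Matrix.of fun a b => X (i, a) (j, b)
  have hX : ∑ p, ∑ q, ‖X p q‖ ^ 2 = ∑ i, ∑ j, ∑ a, ∑ b, ‖B i j a b‖ ^ 2 :=
    Fintype.sum_prod_type_sum_prod_type fun p q => ‖X p q‖ ^ 2
  constructor
  · rw [one_div_mul_eq_div]
    refine div_le_of_le_mul₀ (by positivity) (by positivity) ?_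
    calc ‖X‖ ^ 2 ≤ ∑ p, ∑ q, ‖X p q‖ ^ 2 := Matrix.l2_opNorm_sq_le_sum_norm_sq X
      _ ≤ ∑ i, ∑ j, ‖B i j‖ ^ 2 * s := by
        rw [hX]
        gcongr with i _ j _
        simpa [mul_comm] using Matrix.sum_norm_sq_le_min_card_mul_l2_opNorm_sq (B i j)
      _ = (∑ i, ∑ j, ‖B i j‖ ^ 2) * s := by simp only [Finset.sum_mul]
  · calc ∑ i, ∑ j, ‖B i j‖ ^ 2 ≤ ∑ i, ∑ j, ∑ a, ∑ b, ‖B i j a b‖ ^ 2 := by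
          gcongr with i _ j _
          exact Matrix.l2_opNorm_sq_le_sum_norm_sq (B i j)
      _ = ∑ p, ∑ q, ‖X p q‖ ^ 2 := hX.symm
      _ ≤ (min (k * s) (ℓ * s) : ℕ) * ‖X‖ ^ 2 := by
          simpa using Matrix.sum_norm_sq_le_min_card_mul_l2_opNorm_sq X
      _ = s * (min k ℓ : ℕ) * ‖X‖ ^ 2 := by
          rw [min_mul_mul_right]
          push_cast
          ring

/-- Lemma 4.4(i) (Hilbert–Schmidt norm comparison): for a block algebra `𝒮 ≅ Mat_s(ℂ)`
and `X ∈ Mat_{k×ℓ}(𝒮)` (identified with a `ks × ℓs` complex matrix), one has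
`(1/s)‖X‖² ≤ Σ_{i,j} ‖X(i,j)‖² ≤ s·min(k,ℓ)·‖X‖²`, where `X(i,j)` denotes the `(i,j)`
block of `X` (an `s × s` matrix). -/
theorem block_hilbert_schmidt_comparison (s k ℓ : ℕ) (hs : 0 < s)
    (X : Matrix (Fin k × Fin s) (Fin ℓ × Fin s) ℂ) :
    (1 / (s : ℝ)) * matOpNorm X ^ 2 ≤
      (∑ i : Fin k, ∑ j : Fin ℓ,
        matOpNorm (Matrix.of fun a b : Fin s => X (i, a) (j, b)) ^ 2) ∧
    (∑ i : Fin k, ∑ j : Fin ℓ,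
        matOpNorm (Matrix.of fun a b : Fin s => X (i, a) (j, b)) ^ 2) ≤
      (s : ℝ) * (min k ℓ : ℕ) * matOpNorm X ^ 2 :=
  block_hilbert_schmidt_comparison_general s k ℓ X
end

section
/- Let {ℰ} ∪ {𝒢(i,j)}_{1≤i≤j≤N} be independent σ-fields, let 𝒢 be the σ-field they generate, and let Z be a 𝒢-measurable square-integrable real random variable. For each k = 1,…,N let 𝒢̂_k be the σ-field generated by ℰ together with the 𝒢(i,j) with k ∉ {i,j}, and let Z_k be a 𝒢̂_k-measurable square-integrable random variable. Then E(|Z − E(Z|ℰ)|² | ℰ) ≤ Σ_{k=1}^N E(|Z − Z_k|² | ℰ) almost surely. -/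
/-!
Let `ℱ_n` be generated by `ℰ` and the `𝒢(i, j)` with `j < n` (indices from `0`), so that
`ℱ_0 = ℰ` and `ℱ_N = 𝒢`. The martingale `M_n = E(Z | ℱ_n)` runs from `E(Z | ℰ)` to `Z` and its
increments are orthogonal conditionally on `ℰ`, so `E(|Z - E(Z | ℰ)|² | ℰ)` is the sum of the
`E(|M_{n+1} - M_n|² | ℰ)`. Going from `ℱ_n` to `ℱ_{n+1}` only adds the `𝒢(i, n)`, which are
independent of `𝒢̂_n ⊇ ℱ_n`; hence `E(Z_n | ℱ_{n+1}) = E(Z_n | ℱ_n)`, the `n`-th increment of `M`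
is also the `n`-th increment of the martingale of `Z - Z_n`, and its conditional second moment is
at most `E(|Z - Z_n|² | ℰ)`.
-/

open MeasureTheory ProbabilityTheory

section ConditionalSecondMoment

variable {Ω : Type*} {m m₁ m₂ C m0 : MeasurableSpace Ω} {μ : Measure Ω} {f g W Y Z : Ω → ℝ}

theorem condExp_sq_nonneg : 0 ≤ᵐ[μ] μ[f ^ 2 | C] :=
  condExp_nonneg (ae_of_all _ fun ω => sq_nonneg (f ω))

variable [IsFiniteMeasure μ]

theorem condExp_mul_eq_zero_of_condExp_eq_zero (hC : C ≤ m) (hm : m ≤ m0)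
    (hf : Integrable f μ) (hgf : Integrable (g * f) μ) (hg : StronglyMeasurable[m] g)
    (hf0 : μ[f | m] =ᵐ[μ] 0) : μ[g * f | C] =ᵐ[μ] 0 :=
  calc μ[g * f | C] =ᵐ[μ] μ[μ[g * f | m] | C] := (condExp_condExp_of_le hC hm).symm
    _ =ᵐ[μ] μ[g * μ[f | m] | C] :=
      condExp_congr_ae (condExp_mul_of_stronglyMeasurable_left hg hgf hf)
    _ =ᵐ[μ] μ[0 | C] := condExp_congr_ae (by filter_upwards [hf0] with ω h; simp [h])
    _ = 0 := condExp_zero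

theorem condExp_sq_add_of_condExp_eq_zero (hC : C ≤ m) (hm : m ≤ m0)
    (hf : MemLp f 2 μ) (hg : MemLp g 2 μ) (hgm : StronglyMeasurable[m] g)
    (hf0 : μ[f | m] =ᵐ[μ] 0) :
    μ[(f + g) ^ 2 | C] =ᵐ[μ] μ[f ^ 2 | C] + μ[g ^ 2 | C] := by
  have hf2 : Integrable (f ^ 2) μ := hf.integrable_sq
  have hg2 : Integrable (g ^ 2) μ := hg.integrable_sq
  have h2g : MemLp (2 * g) 2 μ := hg.const_mul 2
  have hcross : Integrable (2 * g * f) μ := h2g.integrable_mul hf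
  have hcross0 : μ[2 * g * f | C] =ᵐ[μ] 0 :=
    condExp_mul_eq_zero_of_condExp_eq_zero hC hm (hf.integrable one_le_two) hcross
      (stronglyMeasurable_const.mul hgm) hf0
  have hexpand : (f + g) ^ 2 = f ^ 2 + 2 * g * f + g ^ 2 := by ring
  rw [hexpand]
  filter_upwards [condExp_add (hf2.add hcross) hg2 C, condExp_add hf2 hcross C, hcross0]
    with ω h₁ h₂ h₃
  simp only [Pi.add_apply, Pi.zero_apply] at h₁ h₂ h₃ ⊢
  rw [h₁, h₂, h₃, add_zero]

theorem condExp_sub_condExp_eq_zero (hm : m ≤ m0) (hW : Integrable W μ) :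
    μ[W - μ[W | m] | m] =ᵐ[μ] 0 := by
  filter_upwards [condExp_sub hW integrable_condExp m] with ω h
  rw [h, condExp_of_stronglyMeasurable hm stronglyMeasurable_condExp integrable_condExp]
  simp

theorem condExp_condExp_sub_condExp_eq_zero (h₁₂ : m₁ ≤ m₂) (hm₂ : m₂ ≤ m0) :
    μ[μ[W | m₂] - μ[W | m₁] | m₁] =ᵐ[μ] 0 := by
  filter_upwards [condExp_sub (m := m₁) (integrable_condExp (f := W) (m := m₂))
    integrable_condExp, condExp_condExp_of_le (f := W) (μ := μ) h₁₂ hm₂] with ω h h'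
  rw [h, Pi.sub_apply, h', condExp_of_stronglyMeasurable (h₁₂.trans hm₂)
    stronglyMeasurable_condExp integrable_condExp]
  simp

theorem condExp_sq_condExp_le (hC : C ≤ m) (hm : m ≤ m0) (hW : MemLp W 2 μ) :
    μ[μ[W | m] ^ 2 | C] ≤ᵐ[μ] μ[W ^ 2 | C] := by
  have hpyth := condExp_sq_add_of_condExp_eq_zero hC hm (hW.sub (hW.condExp one_le_two))
    (hW.condExp one_le_two) stronglyMeasurable_condExp
    (condExp_sub_condExp_eq_zero hm (hW.integrable one_le_two))
  rw [sub_add_cancel] at hpyth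
  filter_upwards [hpyth, condExp_sq_nonneg (f := W - μ[W | m])] with ω h h₀
  simp only [Pi.add_apply, Pi.zero_apply] at h h₀
  linarith

theorem condExp_sq_condExp_sub_condExp_le (hC : C ≤ m₁) (h₁₂ : m₁ ≤ m₂) (hm₂ : m₂ ≤ m0)
    (hW : MemLp W 2 μ) : μ[(μ[W | m₂] - μ[W | m₁]) ^ 2 | C] ≤ᵐ[μ] μ[W ^ 2 | C] := by
  have hpyth := condExp_sq_add_of_condExp_eq_zero hC (h₁₂.trans hm₂)
    ((hW.condExp one_le_two).sub (hW.condExp one_le_two)) (hW.condExp one_le_two)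
    stronglyMeasurable_condExp (condExp_condExp_sub_condExp_eq_zero h₁₂ hm₂)
  rw [sub_add_cancel] at hpyth
  filter_upwards [hpyth, condExp_sq_condExp_le (hC.trans h₁₂) hm₂ hW,
    condExp_sq_nonneg (f := μ[W | m₁])] with ω h hle h₀
  simp only [Pi.add_apply, Pi.zero_apply] at h h₀
  linarith

theorem condExp_sq_condExp_sub_condExp_le_of_condExp_eq (hC : C ≤ m₁) (h₁₂ : m₁ ≤ m₂)
    (hm₂ : m₂ ≤ m0) (hZ : MemLp Z 2 μ) (hY : MemLp Y 2 μ) (hY₁₂ : μ[Y | m₂] =ᵐ[μ] μ[Y | m₁]) :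
    μ[(μ[Z | m₂] - μ[Z | m₁]) ^ 2 | C] ≤ᵐ[μ] μ[(Z - Y) ^ 2 | C] := by
  have hZi := hZ.integrable one_le_two
  have hYi := hY.integrable one_le_two
  have hdiff : μ[Z | m₂] - μ[Z | m₁] =ᵐ[μ] μ[Z - Y | m₂] - μ[Z - Y | m₁] := by
    filter_upwards [condExp_sub hZi hYi m₂, condExp_sub hZi hYi m₁, hY₁₂] with ω h₂ h₁ hY
    simp only [Pi.sub_apply] at h₂ h₁ ⊢
    rw [h₂, h₁, hY]
    ring
  exact (condExp_congr_ae (hdiff.fun_comp (· ^ 2))).trans_le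
    (condExp_sq_condExp_sub_condExp_le hC h₁₂ hm₂ (hZ.sub hY))

theorem condExp_sq_condExp_sub_le_sum {F : ℕ → MeasurableSpace Ω} (hmono : Monotone F)
    (hF : ∀ n, F n ≤ m0) (hZ : MemLp Z 2 μ) {N : ℕ} (Y : Fin N → Ω → ℝ)
    (hY : ∀ k, MemLp (Y k) 2 μ) (hYF : ∀ k : Fin N, μ[Y k | F (k + 1)] =ᵐ[μ] μ[Y k | F k]) :
    μ[(μ[Z | F N] - μ[Z | F 0]) ^ 2 | F 0] ≤ᵐ[μ] ∑ k, μ[(Z - Y k) ^ 2 | F 0] := by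
  induction N with
  | zero => simpa using Filter.EventuallyLE.rfl
  | succ N ih =>
    have hZ2 : ∀ n, MemLp (μ[Z | F n]) 2 μ := fun n => hZ.condExp one_le_two
    have hpyth := condExp_sq_add_of_condExp_eq_zero (hmono N.zero_le) (hF N)
      ((hZ2 (N + 1)).sub (hZ2 N)) ((hZ2 N).sub (hZ2 0))
      (stronglyMeasurable_condExp.sub (stronglyMeasurable_condExp.mono (hmono N.zero_le)))
      (condExp_condExp_sub_condExp_eq_zero (hmono N.le_succ) (hF _))
    rw [sub_add_sub_cancel] at hpyth
    have hlast := condExp_sq_condExp_sub_condExp_le_of_condExp_eq (hmono N.zero_le)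
      (hmono N.le_succ) (hF _) hZ (hY (Fin.last N)) (hYF (Fin.last N))
    have hinit := ih (fun k => Y k.castSucc) (fun k => hY _) (fun k => hYF k.castSucc)
    rw [Fin.sum_univ_castSucc]
    filter_upwards [hpyth, hlast, hinit] with ω h hl hi
    simp only [Pi.add_apply, Finset.sum_apply] at h hi ⊢
    linarith

end ConditionalSecondMoment

section Independence

theorem IsPiSystem.image2_inter {α : Type*} {S T : Set (Set α)} (hS : IsPiSystem S)
    (hT : IsPiSystem T) : IsPiSystem (Set.image2 (· ∩ ·) S T) := by
  rintro _ ⟨s₁, hs₁, t₁, ht₁, rfl⟩ _ ⟨s₂, hs₂, t₂, ht₂, rfl⟩ hne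
  rw [Set.inter_inter_inter_comm] at hne ⊢
  exact Set.mem_image2_of_mem (hS _ hs₁ _ hs₂ hne.left) (hT _ ht₁ _ ht₂ hne.right)

theorem MeasurableSpace.sup_eq_generateFrom_image2_inter {Ω : Type*}
    (m₁ m₂ : MeasurableSpace Ω) :
    m₁ ⊔ m₂ =
      generateFrom (Set.image2 (· ∩ ·) {s | MeasurableSet[m₁] s} {t | MeasurableSet[m₂] t}) :=
  le_antisymm
    (sup_le (fun s hs => measurableSet_generateFrom ⟨s, hs, _, .univ, Set.inter_univ s⟩)
      (fun t ht => measurableSet_generateFrom ⟨_, .univ, t, ht, Set.univ_inter t⟩))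
    (generateFrom_le (Set.forall_mem_image2.2 fun s hs t ht =>
      (le_sup_left (b := m₂) s hs).inter (le_sup_right (a := m₁) t ht)))

variable {Ω : Type*} {mA mB mC m0 : MeasurableSpace Ω} {μ : Measure Ω} [IsFiniteMeasure μ]
  {h : Ω → ℝ}

theorem setIntegral_inter_eq_mul_of_indep (hA : mA ≤ m0) (hB : mB ≤ m0) (hAB : Indep mA mB μ)
    (hh : StronglyMeasurable[mA] h) (hint : Integrable h μ) {a b : Set Ω}
    (ha : MeasurableSet[mA] a) (hb : MeasurableSet[mB] b) :
    ∫ ω in a ∩ b, h ω ∂μ = μ.real b * ∫ ω in a, h ω ∂μ :=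
  calc ∫ ω in a ∩ b, h ω ∂μ = ∫ ω in b, a.indicator h ω ∂μ := by
        rw [setIntegral_indicator (hA _ ha), Set.inter_comm]
    _ = ∫ ω in b, μ[a.indicator h | mB] ω ∂μ :=
        (setIntegral_condExp hB (hint.indicator (hA _ ha)) hb).symm
    _ = ∫ _ in b, ∫ ω, a.indicator h ω ∂μ ∂μ := setIntegral_congr_ae (hB _ hb) <| by
        filter_upwards [condExp_indep_eq hA hB (hh.indicator ha) hAB] with ω hω _ using hω
    _ = μ.real b * ∫ ω in a, h ω ∂μ := by
        rw [setIntegral_const, integral_indicator (hA _ ha), smul_eq_mul]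

theorem condExp_sup_eq_of_indep (hCA : mC ≤ mA) (hA : mA ≤ m0) (hB : mB ≤ m0)
    (hAB : Indep mA mB μ) (hh : StronglyMeasurable[mA] h) :
    μ[h | mC ⊔ mB] =ᵐ[μ] μ[h | mC] := by
  by_cases hint : Integrable h μ
  swap
  · simp [condExp_of_not_integrable hint]
  have hC : mC ≤ m0 := hCA.trans hA
  have hCB : mC ⊔ mB ≤ m0 := sup_le hC hB
  refine (ae_eq_condExp_of_forall_setIntegral_eq hCB hint
    (fun s _ _ => integrable_condExp.integrableOn) (fun s hs hμs => ?_)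
    (stronglyMeasurable_condExp.mono (le_sup_left : mC ≤ mC ⊔ mB)).aestronglyMeasurable).symm
  clear hμs
  induction s, hs using MeasurableSpace.induction_on_inter
    (MeasurableSpace.sup_eq_generateFrom_image2_inter mC mB)
    ((@MeasurableSpace.isPiSystem_measurableSet _ mC).image2_inter
      (@MeasurableSpace.isPiSystem_measurableSet _ mB)) with
  | empty => simp
  | basic _ hs =>
    obtain ⟨c, hc, b, hb, rfl⟩ := hs
    rw [setIntegral_inter_eq_mul_of_indep hA hB hAB (stronglyMeasurable_condExp.mono hCA)
      integrable_condExp (hCA _ hc) hb, setIntegral_inter_eq_mul_of_indep hA hB hAB hh hint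
      (hCA _ hc) hb, setIntegral_condExp hC hint hc]
  | compl t ht iht =>
    rw [setIntegral_compl (hCB t ht) integrable_condExp, setIntegral_compl (hCB t ht) hint, iht,
      integral_condExp hC]
  | iUnion f hdisj hmeas hf =>
    rw [integral_iUnion (fun i => hCB _ (hmeas i)) hdisj integrable_condExp.integrableOn,
      integral_iUnion (fun i => hCB _ (hmeas i)) hdisj hint.integrableOn]
    exact tsum_congr hf

theorem condExp_biSup_union_eq_of_iIndep {ι : Type*} {κ : ι → MeasurableSpace Ω}
    (hκ : ∀ i, κ i ≤ m0) (hind : iIndep κ μ) {S S' T : Set ι} (hSS' : S ⊆ S')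
    (hS'T : Disjoint S' T) (hh : StronglyMeasurable[⨆ i ∈ S', κ i] h) :
    μ[h | ⨆ i ∈ S ∪ T, κ i] =ᵐ[μ] μ[h | ⨆ i ∈ S, κ i] := by
  rw [iSup_union]
  exact condExp_sup_eq_of_indep (biSup_mono fun i hi => hSS' hi) (iSup₂_le fun i _ => hκ i)
    (iSup₂_le fun i _ => hκ i) (indep_iSup_of_disjoint hκ hind hS'T) hh

end Independence

section PairIndex

variable {N : ℕ}

def pairsBefore (N n : ℕ) : Set (Option {p : Fin N × Fin N // p.1 ≤ p.2}) :=
  {o | ∀ p ∈ o, (p.1.2 : ℕ) < n}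

def pairsEndingAt (N n : ℕ) : Set (Option {p : Fin N × Fin N // p.1 ≤ p.2}) :=
  {o | ∃ p ∈ o, (p.1.2 : ℕ) = n}

def pairsAvoiding (k : Fin N) : Set (Option {p : Fin N × Fin N // p.1 ≤ p.2}) :=
  {o | ∀ p ∈ o, p.1.1 ≠ k ∧ p.1.2 ≠ k}

theorem pairsBefore_zero : pairsBefore N 0 = {none} := by
  ext (_ | p)
  · simp [pairsBefore]
  · exact iff_of_false (fun h => Nat.not_lt_zero _ (h p rfl)) (by simp)

theorem pairsBefore_self : pairsBefore N N = Set.univ :=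
  Set.eq_univ_of_forall fun _ p _ => p.1.2.isLt

theorem pairsBefore_mono : Monotone (pairsBefore N) :=
  fun _ _ hmn _ ho p hp => (ho p hp).trans_le hmn

theorem pairsBefore_succ (n : ℕ) :
    pairsBefore N (n + 1) = pairsBefore N n ∪ pairsEndingAt N n := by
  ext (_ | p)
  · simp [pairsBefore]
  · simp only [pairsBefore, pairsEndingAt, Set.mem_union, Set.mem_ofPred_eq, Option.mem_def,
      Option.some.injEq, forall_eq', exists_eq_left', Nat.lt_succ_iff_lt_or_eq]

theorem pairsBefore_subset_pairsAvoiding (k : Fin N) : pairsBefore N k ⊆ pairsAvoiding k := by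
  rintro (_ | ⟨⟨i, j⟩, hij⟩) ho
  · simp [pairsAvoiding]
  · have hj : j < k := ho _ rfl
    simp only [pairsAvoiding, Set.mem_ofPred_eq, Option.mem_def, Option.some.injEq, forall_eq']
    exact ⟨(hij.trans_lt hj).ne, hj.ne⟩

theorem disjoint_pairsAvoiding_pairsEndingAt (k : Fin N) :
    Disjoint (pairsAvoiding k) (pairsEndingAt N k) := by
  rw [Set.disjoint_left]
  rintro o ho ⟨p, hp, hpk⟩
  exact (ho p hp).2 (Fin.ext hpk)

end PairIndex

section PairFamily

variable {Ω : Type*} {N : ℕ} (E : MeasurableSpace Ω) (G : Fin N → Fin N → MeasurableSpace Ω)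

abbrev pairFamily (o : Option {p : Fin N × Fin N // p.1 ≤ p.2}) : MeasurableSpace Ω :=
  o.elim E fun p => G p.1.1 p.1.2

abbrev pairFiltration (n : ℕ) : MeasurableSpace Ω :=
  ⨆ o ∈ pairsBefore N n, pairFamily E G o

theorem pairFiltration_zero : pairFiltration E G 0 = E := by
  rw [pairFiltration, pairsBefore_zero, iSup_singleton]
  rfl

theorem pairFiltration_self :
    pairFiltration E G N = E ⊔ ⨆ p : {p : Fin N × Fin N // p.1 ≤ p.2}, G p.1.1 p.1.2 := by
  rw [pairFiltration, pairsBefore_self, iSup_univ]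
  exact iSup_option_elim _ _

theorem pairFiltration_mono : Monotone (pairFiltration E G) :=
  fun _ _ hmn => biSup_mono fun _ ho => pairsBefore_mono hmn ho

variable {E G} {m0 : MeasurableSpace Ω}

theorem pairFamily_le (hE : E ≤ m0) (hG : ∀ i j, G i j ≤ m0) :
    ∀ o, pairFamily E G o ≤ m0
  | none => hE
  | some _ => hG _ _

theorem pairFiltration_le (hE : E ≤ m0) (hG : ∀ i j, G i j ≤ m0) (n : ℕ) :
    pairFiltration E G n ≤ m0 :=
  iSup₂_le fun o _ => pairFamily_le hE hG o

theorem sup_iSup_le_iSup_pairsAvoiding (k : Fin N) :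
    E ⊔ ⨆ p : {p : Fin N × Fin N // p.1 ≤ p.2 ∧ p.1 ≠ k ∧ p.2 ≠ k}, G p.1.1 p.1.2 ≤
      ⨆ o ∈ pairsAvoiding k, pairFamily E G o :=
  sup_le (le_biSup (pairFamily E G) (i := none) fun _ h => (Option.not_mem_none _ h).elim)
    (iSup_le fun p => le_biSup (pairFamily E G) (i := some ⟨p.1, p.2.1⟩)
      fun _ hq => by obtain rfl := Option.some_inj.1 (Option.mem_def.1 hq); exact p.2.2)

theorem condExp_pairFiltration_succ {μ : Measure Ω} [IsFiniteMeasure μ] (hE : E ≤ m0)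
    (hG : ∀ i j, G i j ≤ m0) (hindep : iIndep (pairFamily E G) μ) (k : Fin N) {Y : Ω → ℝ}
    (hY : StronglyMeasurable[E ⊔
      ⨆ p : {p : Fin N × Fin N // p.1 ≤ p.2 ∧ p.1 ≠ k ∧ p.2 ≠ k}, G p.1.1 p.1.2] Y) :
    μ[Y | pairFiltration E G (k + 1)] =ᵐ[μ] μ[Y | pairFiltration E G k] := by
  rw [pairFiltration, pairsBefore_succ]
  exact condExp_biSup_union_eq_of_iIndep (pairFamily_le hE hG) hindep
    (pairsBefore_subset_pairsAvoiding k) (disjoint_pairsAvoiding_pairsEndingAt k)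
    (hY.mono (sup_iSup_le_iSup_pairsAvoiding k))

end PairFamily

/-- Proposition 4.7（subadditivity of conditional variance: let
`ℰ ∪ {𝒢(i,j)}_{1≤i≤j≤N}` be independent σ-fields generating `𝒢`, `Z` a
square-integrable `𝒢`-measurable random variable, and for each `k` let `Z_k` be a
square-integrable random variable measurable with respect to the σ-field `𝒢̂_k`
generated by `ℰ` and the `𝒢(i,j)` with `k ∉ {i,j}`.  Then almost surely
`E(|Z − E(Z|ℰ)|² | ℰ) ≤ Σ_k E(|Z − Z_k|² | ℰ)`. -/
theorem conditional_variance_subadditive {Ω : Type*} [m0 : MeasurableSpace Ω]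
    (μ : Measure Ω) [IsProbabilityMeasure μ]
    (N : ℕ) (E : MeasurableSpace Ω) (G : Fin N → Fin N → MeasurableSpace Ω)
    (hE : E ≤ m0) (hG : ∀ i j, G i j ≤ m0)
    (hindep : iIndep (fun o : Option {p : Fin N × Fin N // p.1 ≤ p.2} =>
      Option.elim o E (fun p => G p.1.1 p.1.2)) μ)
    (Z : Ω → ℝ)
    (hZmeas : StronglyMeasurable[E ⊔ ⨆ p : {p : Fin N × Fin N // p.1 ≤ p.2}, G p.1.1 p.1.2] Z)
    (hZ2 : MemLp Z 2 μ)
    (Zk : Fin N → Ω → ℝ)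
    (hZkmeas : ∀ k : Fin N, StronglyMeasurable[E ⊔
      ⨆ p : {p : Fin N × Fin N // p.1 ≤ p.2 ∧ p.1 ≠ k ∧ p.2 ≠ k}, G p.1.1 p.1.2] (Zk k))
    (hZk2 : ∀ k, MemLp (Zk k) 2 μ) :
    ∀ᵐ ω ∂μ,
      (μ[fun ω' => (Z ω' - (μ[Z | E]) ω') ^ 2 | E]) ω ≤
        ∑ k : Fin N, (μ[fun ω' => (Z ω' - Zk k ω') ^ 2 | E]) ω := by
  have hZF : μ[Z | pairFiltration E G N] = Z :=
    condExp_of_stronglyMeasurable (pairFiltration_le hE hG N)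
      (by rwa [pairFiltration_self]) (hZ2.integrable one_le_two)
  have hvar := condExp_sq_condExp_sub_le_sum (pairFiltration_mono E G) (pairFiltration_le hE hG)
    hZ2 Zk hZk2 fun k => condExp_pairFiltration_succ hE hG hindep k (hZkmeas k)
  rw [hZF, pairFiltration_zero] at hvar
  filter_upwards [hvar] with ω h
  rw [Finset.sum_apply] at h
  exact h
end

section
/- Let 𝒮 be a finite-dimensional C*-algebra (e.g. a matrix algebra), 𝒟 ⊂ 𝒮 an open set, Φ ∈ B(𝒮) a bounded linear map, and G: 𝒟 → 𝒮 an analytic (continuously differentiable suffices) solution of the Schwinger–Dyson equation 1 + (Λ + Φ(G(Λ)))G(Λ) = 0 for all Λ ∈ 𝒟. Then for every Λ ∈ 𝒟 and ζ ∈ 𝒮, writing G = G(Λ) and G'(ζ) for the directional derivative D[G](Λ; ζ), one has ζ = G⁻¹ G'(ζ) G⁻¹ − Φ(G'(ζ)), and consequently 0 = G + G'(Λ) + 2·G'(Φ(G)) (the last using G'(G⁻¹ ζ G⁻¹ − Φ(ζ)) = ζ). -/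
/-!
Differentiating the Schwinger–Dyson equation `1 + (Λ + Φ(G)) G = 0` at `Λ` in the direction `ζ`
gives `(Λ + Φ(G)) G'(ζ) + (ζ + Φ(G'(ζ))) G = 0`. The equation itself says that `-(Λ + Φ(G))`
is a left inverse of `G`, hence a two-sided one because `𝒮` is finite-dimensional (so
Artinian, so Dedekind-finite); substituting it turns the differentiated equation into
`ζ = G⁻¹ G'(ζ) G⁻¹ − Φ(G'(ζ))`. This exhibits `η ↦ G⁻¹ η G⁻¹ − Φ(η)` as a left inverse of `G'`,
which again by finite dimension is also a right inverse; applying `G'` to its value at `G`,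
namely `G⁻¹ − Φ(G) = −Λ − 2Φ(G)`, gives the last identity.
-/

open Filter Topology
open scoped Ring

theorem Ring.inverse_eq_of_mul_eq_one {M₀ : Type*} [MonoidWithZero M₀]
    [IsDedekindFiniteMonoid M₀] {a b : M₀} (h : a * b = 1) : b⁻¹ʳ = a :=
  calc b⁻¹ʳ = a * b * b⁻¹ʳ := by rw [h, one_mul]
    _ = a := Ring.mul_inverse_cancel_right b a (.of_mul_eq_one_right a h)

theorem LinearMap.rightInverse_of_leftInverse {K V : Type*} [DivisionRing K] [AddCommGroup V]
    [Module K V] [FiniteDimensional K V] {f g : V →ₗ[K] V} (h : Function.LeftInverse g f) :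
    Function.RightInverse g f := by
  have hgf : g * f = 1 := LinearMap.ext h
  exact LinearMap.ext_iff.mp (mul_eq_one_comm.mp hgf)

section SchwingerDyson

variable {𝕜 𝒮 : Type*} [NontriviallyNormedField 𝕜] [NormedRing 𝒮] [NormedAlgebra 𝕜 𝒮]
  {Φ G' : 𝒮 →L[𝕜] 𝒮} {G : 𝒮 → 𝒮} {Λ : 𝒮}

theorem schwingerDyson_hasFDerivAt (hG' : HasFDerivAt G G' Λ) :
    HasFDerivAt (fun x ↦ 1 + (x + Φ (G x)) * G x)
      ((Λ + Φ (G Λ)) • G' + (ContinuousLinearMap.id 𝕜 𝒮 + Φ.comp G').smulRight (G Λ)) Λ :=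
  (((hasFDerivAt_id Λ).add (Φ.hasFDerivAt.comp Λ hG')).mul' hG').const_add 1

theorem schwingerDyson_linearized (hSD : ∀ᶠ x in 𝓝 Λ, 1 + (x + Φ (G x)) * G x = 0)
    (hG' : HasFDerivAt G G' Λ) (ζ : 𝒮) :
    (Λ + Φ (G Λ)) * G' ζ + (ζ + Φ (G' ζ)) * G Λ = 0 := by
  have hzero := (schwingerDyson_hasFDerivAt (Φ := Φ) hG').unique
    ((hasFDerivAt_const 0 Λ).congr_of_eventuallyEq hSD)
  simpa [add_mul] using DFunLike.congr_fun hzero ζ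

end SchwingerDyson

theorem schwinger_dyson_differentiated_general {𝒮 : Type*} [NormedRing 𝒮]
    [NormedAlgebra ℂ 𝒮] [FiniteDimensional ℂ 𝒮]
    (D : Set 𝒮) (hD : IsOpen D) (Φ : 𝒮 →L[ℂ] 𝒮) (G : 𝒮 → 𝒮)
    (hSD : ∀ Λ ∈ D, (1 : 𝒮) + (Λ + Φ (G Λ)) * G Λ = 0)
    (Λ : 𝒮) (hΛ : Λ ∈ D) (G' : 𝒮 →L[ℂ] 𝒮) (hG' : HasFDerivAt G G' Λ) :
    IsUnit (G Λ) ∧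
    (∀ ζ : 𝒮, ζ = Ring.inverse (G Λ) * G' ζ * Ring.inverse (G Λ) - Φ (G' ζ)) ∧
    G Λ + G' Λ + 2 • G' (Φ (G Λ)) = 0 := by
  have := IsArtinianRing.of_finite ℂ 𝒮
  set g := G Λ
  have hleft : -(Λ + Φ g) * g = 1 := by
    rw [neg_mul, eq_neg_of_add_eq_zero_right (hSD Λ hΛ), neg_neg]
  have hunit : IsUnit g := .of_mul_eq_one_right _ hleft
  have hinv : g⁻¹ʳ = -(Λ + Φ g) := Ring.inverse_eq_of_mul_eq_one hleft
  have hlin := schwingerDyson_linearized (eventually_of_mem (hD.mem_nhds hΛ) hSD) hG'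
  have hsolve (ζ : 𝒮) : ζ = g⁻¹ʳ * G' ζ * g⁻¹ʳ - Φ (G' ζ) := by
    refine eq_sub_of_add_eq ((Ring.eq_mul_inverse_iff_mul_eq _ _ _ hunit).mpr ?_)
    rw [hinv, neg_mul, eq_neg_iff_add_eq_zero, add_comm]
    exact hlin ζ
  refine ⟨hunit, hsolve, ?_⟩
  set T : 𝒮 →ₗ[ℂ] 𝒮 := LinearMap.mulLeftRight ℂ (g⁻¹ʳ, g⁻¹ʳ) - Φ
  have hright : Function.RightInverse T G' :=
    LinearMap.rightInverse_of_leftInverse fun ζ ↦ (hsolve ζ).symm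
  have hTg : T g = -Λ - 2 • Φ g := by
    rw [LinearMap.sub_apply, LinearMap.mulLeftRight_apply, Ring.inverse_mul_cancel _ hunit,
      one_mul, hinv, ContinuousLinearMap.coe_coe, two_smul]
    abel
  have hg : G' (-Λ - 2 • Φ g) = g := hTg ▸ hright g
  rw [map_sub, map_neg, map_nsmul] at hg
  linear_combination (norm := abel) -hg

/-- Proposition 6.2 (differentiated Schwinger–Dyson equation): let `𝒮` be a
finite-dimensional Banach algebra (e.g. a block algebra), `D ⊆ 𝒮` open,
`Φ : 𝒮 → 𝒮` a bounded linear map, and `G : D → 𝒮` a solution of the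
Schwinger–Dyson equation `1 + (Λ + Φ(G(Λ)))·G(Λ) = 0` on `D`, differentiable at
`Λ ∈ D` with derivative `G'`.  Then `G(Λ)` is invertible, for every `ζ` one has
`ζ = G(Λ)⁻¹·G'(ζ)·G(Λ)⁻¹ − Φ(G'(ζ))`, and `G(Λ) + G'(Λ) + 2·G'(Φ(G(Λ))) = 0`. -/
theorem schwinger_dyson_differentiated {𝒮 : Type*} [NormedRing 𝒮]
    [NormedAlgebra ℂ 𝒮] [CompleteSpace 𝒮] [FiniteDimensional ℂ 𝒮]
    (D : Set 𝒮) (hD : IsOpen D) (Φ : 𝒮 →L[ℂ] 𝒮) (G : 𝒮 → 𝒮)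
    (hSD : ∀ Λ ∈ D, (1 : 𝒮) + (Λ + Φ (G Λ)) * G Λ = 0)
    (Λ : 𝒮) (hΛ : Λ ∈ D) (G' : 𝒮 →L[ℂ] 𝒮) (hG' : HasFDerivAt G G' Λ) :
    IsUnit (G Λ) ∧
    (∀ ζ : 𝒮, ζ = Ring.inverse (G Λ) * G' ζ * Ring.inverse (G Λ) - Φ (G' ζ)) ∧
    G Λ + G' Λ + 2 • G' (Φ (G Λ)) = 0 :=
  schwinger_dyson_differentiated_general D hD Φ G hSD Λ hΛ G' hG'
end

section
/- Let 𝒜 be a C*-algebra containing a Cuntz frame {π} ∪ {ρ_i}_{i=1}^∞ (π a nonzero projection, πρ_i = 0 and ρ_i*ρ_j = δ_{ij}·1 for all i,j). Let A ∈ 𝒜 be invertible and quasi-circular with respect to the frame: (a) ρ_i* A ρ_j = δ_{ij} A for all i,j; (b) π A ρ_i π = π A ρ_i and π ρ_i* A π = ρ_i* A π for all i; (c) there exists k_A ≥ 0 such that A commutes with π + Σ_{i=1}^{k_A} ρ_i ρ_i* and with ρ_i and ρ_i* for all i > k_A. Then for any k ≥ k_A, π A π − Σ_{i=1}^k π A ρ_i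 (π A⁻¹ π) ρ_i* A π is invertible in the corner algebra π𝒜π, and its inverse there equals π A⁻¹ π. -/
/-!
Write `y = x⁻¹`, `σᵢ = ρᵢ*` and `Q = π + ∑_{i<k} ρᵢ σᵢ`. By (c), `Q` commutes with `x`, hence with
`y`, and `Q π = π` because `σᵢ π = 0`. Expanding `0 = σᵢ π = σᵢ x Q y π` with (a) gives
`σᵢ x π y π = -x σᵢ y π`; after (b) removes the inner `π`s, this turns each summand of
`(π x π - ∑ …) (π y π)` into `-π x ρᵢ σᵢ y π`, so the product is `π x Q y π = π x y π = π`.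
The hypotheses are symmetric under passing to the opposite ring and exchanging `ρ` with `σ`,
which yields the other identity.
-/

open Finset MulOpposite

section CornerInverse

variable {A : Type*} [Ring A] {π x y : A} {ρ σ : ℕ → A} {s : Finset ℕ}

lemma sum_mul_mul_mul_of_biorthogonal
    (hσxρ : ∀ i ∈ s, ∀ j ∈ s, σ i * x * ρ j = if i = j then x else 0)
    {i : ℕ} (hi : i ∈ s) (c : ℕ → A) : ∑ j ∈ s, σ i * x * ρ j * c j = x * c i := by
  rw [sum_congr rfl fun j hj => by rw [hσxρ i hi j hj]]
  simp [hi]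

lemma add_sum_mul_self_of_mul_eq_zero (hπ : IsIdempotentElem π) (hσπ : ∀ i ∈ s, σ i * π = 0) :
    (π + ∑ j ∈ s, ρ j * σ j) * π = π := by
  rw [add_mul, hπ.eq, sum_mul, sum_eq_zero fun j hj => by rw [mul_assoc, hσπ j hj, mul_zero],
    add_zero]

lemma add_sum_mul_mul_self_of_commute (hπ : IsIdempotentElem π) (hσπ : ∀ i ∈ s, σ i * π = 0)
    (hQ : Commute y (π + ∑ j ∈ s, ρ j * σ j)) : (π + ∑ j ∈ s, ρ j * σ j) * y * π = y * π := by
  rw [← hQ.eq, mul_assoc, add_sum_mul_self_of_mul_eq_zero hπ hσπ]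

lemma frame_mul_corner_inv_eq_neg (hπ : IsIdempotentElem π) (hσπ : ∀ i ∈ s, σ i * π = 0)
    (hxy : x * y = 1) (hQ : Commute y (π + ∑ j ∈ s, ρ j * σ j))
    (hσxρ : ∀ i ∈ s, ∀ j ∈ s, σ i * x * ρ j = if i = j then x else 0) {i : ℕ} (hi : i ∈ s) :
    σ i * x * π * y * π = -(x * (σ i * y * π)) := by
  refine eq_neg_of_add_eq_zero_left ?_
  calc σ i * x * π * y * π + x * (σ i * y * π)
      = σ i * x * (π + ∑ j ∈ s, ρ j * σ j) * y * π := by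
        rw [← sum_mul_mul_mul_of_biorthogonal hσxρ hi fun j => σ j * y * π]
        simp only [mul_add, add_mul, mul_sum, sum_mul, mul_assoc]
    _ = 0 := by
        rw [mul_assoc _ _ y, mul_assoc _ _ π, add_sum_mul_mul_self_of_commute hπ hσπ hQ,
          ← mul_assoc, mul_assoc _ x, hxy, mul_one, hσπ i hi]

theorem schur_complement_mul_corner_inv (hπ : IsIdempotentElem π)
    (hσπ : ∀ i ∈ s, σ i * π = 0) (hxy : x * y = 1) (hyx : y * x = 1)
    (hQ : Commute y (π + ∑ j ∈ s, ρ j * σ j))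
    (hσxρ : ∀ i ∈ s, ∀ j ∈ s, σ i * x * ρ j = if i = j then x else 0)
    (hxρπ : ∀ i ∈ s, π * x * ρ i * π = π * x * ρ i)
    (hσxπ : ∀ i ∈ s, π * (σ i * x) * π = σ i * x * π) :
    (π * x * π - ∑ i ∈ s, π * x * ρ i * (π * y * π) * (σ i * x * π)) * (π * y * π) = π := by
  have hterm : ∀ i ∈ s, π * x * ρ i * (π * y * π) * (σ i * x * π) * (π * y * π) =
      -(π * x * ρ i * (σ i * y * π)) := fun i hi => calc
    _ = π * x * ρ i * π * y * (π * (σ i * x) * π) * y * π := by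
        simp only [mul_assoc, hπ.mul_self_mul]
    _ = π * x * ρ i * (y * (σ i * x * π * y * π)) := by
        rw [hxρπ i hi, hσxπ i hi]; simp only [mul_assoc]
    _ = _ := by
        rw [frame_mul_corner_inv_eq_neg hπ hσπ hxy hQ hσxρ hi, mul_neg, ← mul_assoc y, hyx, one_mul,
          mul_neg]
  rw [sub_mul, sum_mul, sum_congr rfl hterm, sum_neg_distrib, sub_neg_eq_add]
  calc π * x * π * (π * y * π) + ∑ i ∈ s, π * x * ρ i * (σ i * y * π)
      = π * x * ((π + ∑ j ∈ s, ρ j * σ j) * y * π) := by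
        simp only [mul_add, add_mul, mul_sum, sum_mul, mul_assoc, hπ.mul_self_mul]
    _ = π := by
        rw [add_sum_mul_mul_self_of_commute hπ hσπ hQ, ← mul_assoc, mul_assoc π, hxy, mul_one,
          hπ.eq]

theorem corner_inv_mul_schur_complement (hπ : IsIdempotentElem π)
    (hπρ : ∀ i ∈ s, π * ρ i = 0) (hxy : x * y = 1) (hyx : y * x = 1)
    (hQ : Commute y (π + ∑ j ∈ s, ρ j * σ j))
    (hσxρ : ∀ i ∈ s, ∀ j ∈ s, σ i * x * ρ j = if i = j then x else 0)
    (hxρπ : ∀ i ∈ s, π * x * ρ i * π = π * x * ρ i)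
    (hσxπ : ∀ i ∈ s, π * (σ i * x) * π = σ i * x * π) :
    (π * y * π) * (π * x * π - ∑ i ∈ s, π * x * ρ i * (π * y * π) * (σ i * x * π)) = π := by
  have hop := schur_complement_mul_corner_inv (π := op π) (x := op x) (y := op y)
    (ρ := fun i => op (σ i)) (σ := fun i => op (ρ i)) (s := s) (congrArg op hπ.eq)
    (fun i hi => by rw [← op_mul, hπρ i hi, op_zero]) (by rw [← op_mul, hyx, op_one])
    (by rw [← op_mul, hxy, op_one]) (by simpa [← op_mul] using hQ.op)
    (fun i hi j hj => by simp [← op_mul, ← mul_assoc, hσxρ j hj i hi, eq_comm, apply_ite op])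
    (fun i hi => by simpa [← op_mul, mul_assoc] using congrArg op (hσxπ i hi))
    (fun i hi => by simpa [← op_mul, mul_assoc] using congrArg op (hxρπ i hi))
  simpa [← op_mul, mul_assoc] using congrArg unop hop

end CornerInverse

theorem abstract_schwinger_dyson_general {A : Type*} [CStarAlgebra A]
    (π : A) (ρ : ℕ → A)
    (hπ_star : star π = π) (hπ_idem : π * π = π)
    (hframe1 : ∀ i, π * ρ i = 0)
    (x : A) (hx : IsUnit x)
    (hqc1 : ∀ i j, star (ρ i) * x * ρ j = if i = j then x else 0)
    (hqc2 : ∀ i, π * x * ρ i * π = π * x * ρ i ∧ π * (star (ρ i) * x) * π = star (ρ i) * x * π)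
    (kA : ℕ)
    (hqc3a : Commute x (π + ∑ i ∈ Finset.range kA, ρ i * star (ρ i)))
    (hqc3b : ∀ i, kA ≤ i → Commute x (ρ i) ∧ Commute x (star (ρ i)))
    (k : ℕ) (hk : kA ≤ k) :
    (π * x * π - ∑ i ∈ Finset.range k,
        π * x * ρ i * (π * Ring.inverse x * π) * (star (ρ i) * x * π)) *
      (π * Ring.inverse x * π) = π ∧
    (π * Ring.inverse x * π) *
      (π * x * π - ∑ i ∈ Finset.range k,
        π * x * ρ i * (π * Ring.inverse x * π) * (star (ρ i) * x * π)) = π := by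
  obtain ⟨u, rfl⟩ := hx
  have hσπ (i : ℕ) : star (ρ i) * π = 0 := by
    simpa [hπ_star] using congrArg star (hframe1 i)
  have hQ : Commute (↑u⁻¹ : A) (π + ∑ i ∈ range k, ρ i * star (ρ i)) := by
    refine Commute.units_inv_left ?_
    rw [← sum_range_add_sum_Ico _ hk, ← add_assoc]
    refine hqc3a.add_right <| Commute.sum_right _ _ _ fun i hi => ?_
    obtain ⟨hxρ, hxσ⟩ := hqc3b i (mem_Ico.mp hi).1
    exact hxρ.mul_right hxσ
  rw [Ring.inverse_unit]
  exact ⟨schur_complement_mul_corner_inv hπ_idem (fun i _ => hσπ i) u.mul_inv u.inv_mul hQ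
      (fun i _ j _ => hqc1 i j) (fun i _ => (hqc2 i).1) fun i _ => (hqc2 i).2,
    corner_inv_mul_schur_complement hπ_idem (fun i _ => hframe1 i) u.mul_inv u.inv_mul hQ
      (fun i _ j _ => hqc1 i j) (fun i _ => (hqc2 i).1) fun i _ => (hqc2 i).2⟩

/-- Proposition 3.12 (abstract Schwinger–Dyson equation): let `π, ρ₁, ρ₂, …` be a
Cuntz frame in a C*-algebra `A` and let `x ∈ A` be invertible and quasi-circular with
respect to the frame (with constant `k_A`).  Then for every `k ≥ k_A`, the element
`π x π − Σ_{i<k} π x ρ_i (π x⁻¹ π) ρ_i* x π` is invertible in the corner algebra `πAπ`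
with inverse `π x⁻¹ π` there. -/
theorem abstract_schwinger_dyson {A : Type*} [CStarAlgebra A]
    (π : A) (ρ : ℕ → A)
    (hπ_star : star π = π) (hπ_idem : π * π = π) (hπ_ne : π ≠ 0)
    (hframe1 : ∀ i, π * ρ i = 0)
    (hframe2 : ∀ i j, star (ρ i) * ρ j = if i = j then (1 : A) else 0)
    (x : A) (hx : IsUnit x)
    (hqc1 : ∀ i j, star (ρ i) * x * ρ j = if i = j then x else 0)
    (hqc2 : ∀ i, π * x * ρ i * π = π * x * ρ i ∧ π * (star (ρ i) * x) * π = star (ρ i) * x * π)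
    (kA : ℕ)
    (hqc3a : Commute x (π + ∑ i ∈ Finset.range kA, ρ i * star (ρ i)))
    (hqc3b : ∀ i, kA ≤ i → Commute x (ρ i) ∧ Commute x (star (ρ i)))
    (k : ℕ) (hk : kA ≤ k) :
    (π * x * π - ∑ i ∈ Finset.range k,
        π * x * ρ i * (π * Ring.inverse x * π) * (star (ρ i) * x * π)) *
      (π * Ring.inverse x * π) = π ∧
    (π * Ring.inverse x * π) *
      (π * x * π - ∑ i ∈ Finset.range k,
        π * x * ρ i * (π * Ring.inverse x * π) * (star (ρ i) * x * π)) = π :=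
  abstract_schwinger_dyson_general π ρ hπ_star hπ_idem hframe1 x hx hqc1 hqc2 kA hqc3a hqc3b k hk
end

section
/- Let 𝒜 be a C*-algebra, let {π, π^⊥} be an orthonormal system of projections (each nonzero, ππ^⊥ = 0) and set σ = π + π^⊥. Let x ∈ 𝒜 be such that π^⊥ x π^⊥ is invertible in π^⊥𝒜π^⊥, with inverse x_{π^⊥}⁻¹. Then σxσ is invertible in σ𝒜σ if and only if π(x − x·x_{π^⊥}⁻¹·x)π is invertible in π𝒜π, and under these equivalent conditions, π·x_σ⁻¹·π = (x − x·x_{π^⊥}⁻¹·x)_π⁻¹ and x_σ⁻¹ − x_{π^⊥}⁻¹ = (π − x_{π^⊥}⁻¹xπ)·x_σ⁻¹·(π − πx·x_{π^⊥}⁻¹). -/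
section SchurAux
variable {A : Type*} [Ring A]

private theorem schur_main_part (p q x w : A)
    (hp : p * p = p) (hq : q * q = q) (hpq : p * q = 0) (hqp : q * p = 0)
    (hw_corner : q * w * q = w)
    (hw_inv_l : w * (q * x * q) = q)
    (hw_inv_r : (q * x * q) * w = q) :
    (∀ v : A, (p + q) * v * (p + q) = v →
      v * ((p + q) * x * (p + q)) = p + q →
      ((p + q) * x * (p + q)) * v = p + q →
      ((p * v * p) * (p * (x - x * w * x) * p) = p ∧
       (p * (x - x * w * x) * p) * (p * v * p) = p ∧
       v - w = (p - w * x * p) * v * (p - p * x * w))) := by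
  have assoc4 : ∀ a b c y : A, a * (b * (c * y)) = (a * (b * c)) * y := fun a b c y => by
    rw [mul_assoc, mul_assoc]
  have hpp' : ∀ y : A, p * (p * y) = p * y := fun y => by rw [← mul_assoc, hp]
  have hqq' : ∀ y : A, q * (q * y) = q * y := fun y => by rw [← mul_assoc, hq]
  have hpq' : ∀ y : A, p * (q * y) = 0 := fun y => by rw [← mul_assoc, hpq, zero_mul]
  have hqp' : ∀ y : A, q * (p * y) = 0 := fun y => by rw [← mul_assoc, hqp, zero_mul]
  have hqw : q * w = w := by
    conv_lhs => rw [← hw_corner]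
    rw [← mul_assoc, ← mul_assoc, hq]; exact hw_corner
  have hwq : w * q = w := by
    conv_lhs => rw [← hw_corner]
    rw [mul_assoc, hq]; exact hw_corner
  have hqw' : ∀ y : A, q * (w * y) = w * y := fun y => by rw [← mul_assoc, hqw]
  have hwq' : ∀ y : A, w * (q * y) = w * y := fun y => by rw [← mul_assoc, hwq]
  have hpw : p * w = 0 := by rw [← hqw, ← mul_assoc, hpq, zero_mul]
  have hwp : w * p = 0 := by rw [← hwq, mul_assoc, hqp, mul_zero]
  have hpw' : ∀ y : A, p * (w * y) = 0 := fun y => by rw [← mul_assoc, hpw, zero_mul]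
  have hwp' : ∀ y : A, w * (p * y) = 0 := fun y => by rw [← mul_assoc, hwp, zero_mul]
  have hqxw : q * (x * w) = q := by
    rw [← hqw, ← mul_assoc, ← mul_assoc]; exact hw_inv_r
  have hwxq : w * (x * q) = q := by
    conv_lhs => rw [← hwq]
    rw [mul_assoc, ← mul_assoc q x q]; exact hw_inv_l
  have hqxw' : ∀ y : A, q * (x * (w * y)) = q * y := fun y => by rw [assoc4, hqxw]
  have hwxq' : ∀ y : A, w * (x * (q * y)) = q * y := fun y => by rw [assoc4, hwxq]
  have hσσ : (p + q) * (p + q) = p + q := by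
    rw [mul_add, add_mul, add_mul, hp, hq, hpq, hqp]; abel
  intro v hv hvl hvr
  have hvσ : v * (p + q) = v := by
    conv_lhs => rw [← hv]
    rw [mul_assoc ((p+q)*v), hσσ]; exact hv
  have hσv : (p + q) * v = v := by
    conv_lhs => rw [← hv]
    rw [← mul_assoc, ← mul_assoc, hσσ]; exact hv
  rw [← mul_assoc, ← mul_assoc, hvσ] at hvl
  rw [mul_assoc, hσv] at hvr
  have hvxp : v * (x * p) = p := by
    have h := congrArg (fun t => t * p) hvl
    simpa [mul_assoc, add_mul, mul_add, hp, hqp, hq, hpq] using h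
  have hvxq : v * (x * q) = q := by
    have h := congrArg (fun t => t * q) hvl
    simpa [mul_assoc, add_mul, mul_add, hp, hqp, hq, hpq] using h
  have hpxv : p * (x * v) = p := by
    have h := congrArg (fun t => p * t) hvr
    simpa [← mul_assoc, add_mul, mul_add, hp, hqp, hq, hpq, hpq', hqp', hpp', hqq', mul_assoc] using h
  have hqxv : q * (x * v) = q := by
    have h := congrArg (fun t => q * t) hvr
    simpa [← mul_assoc, add_mul, mul_add, hp, hqp, hq, hpq, hpq', hqp', hpp', hqq', mul_assoc] using h
  have hvsplit : ∀ z : A, v * (p * z) + v * (q * z) = v * z := fun z => by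
    have h := congrArg (fun t => t * z) hvσ
    simpa [mul_add, add_mul, mul_assoc] using h
  have hsplitL : ∀ z : A, p * (v * z) + q * (v * z) = v * z := fun z => by
    have h := congrArg (fun t => t * z) hσv
    simpa [mul_add, add_mul, mul_assoc] using h
  have hvxp' : ∀ y : A, v * (x * (p * y)) = p * y := fun y => by rw [assoc4, hvxp]
  have hvxq' : ∀ y : A, v * (x * (q * y)) = q * y := fun y => by rw [assoc4, hvxq]
  have hvxw : v * (x * w) = w := by
    rw [← hqw]; exact hvxq' w
  have hwxv : w * (x * v) = w := by
    conv_lhs => rw [← hwq]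
    rw [mul_assoc, hqxv]; exact hwq
  have hwxv' : ∀ z : A, w * (x * (v * z)) = w * z := fun z => by rw [assoc4, hwxv]
  have hpxv' : ∀ z : A, p * (x * (v * z)) = p * z := fun z => by rw [assoc4, hpxv]
  have hvxw' : ∀ y : A, v * (x * (w * y)) = w * y := fun y => by
    rw [← hqw' y]; exact hvxq' (w * y)
  have vpxw : ∀ y : A, v * (p * (x * (w * y))) = w * y - v * (q * y) := fun y => by
    have h := hvsplit (x * (w * y))
    rw [hqxw' y, hvxw' y] at h
    exact eq_sub_of_add_eq h
  have vpxw1 : v * (p * (x * w)) = w - v * q := by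
    have h := hvsplit (x * w)
    rw [hqxw, hvxw] at h
    exact eq_sub_of_add_eq h
  have wxpv : ∀ z : A, w * (x * (p * (v * z))) = w * z - q * (v * z) := fun z => by
    have h := congrArg (fun t => w * (x * t)) (hsplitL z)
    simp only [mul_add] at h
    rw [hwxq' (v * z), hwxv' z] at h
    exact eq_sub_of_add_eq h
  refine ⟨?_, ?_, ?_⟩
  · have h := hvsplit (x * p)
    rw [hvxp] at h
    calc (p*v*p) * (p*(x - x*w*x)*p)
        = p * (v * (p * (x * p))) - p * (v * (p * (x * (w * (x * p))))) := by
          simp only [mul_sub, sub_mul, mul_assoc, hpp']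
      _ = p * (v * (p * (x * p))) - p * (w * (x * p) - v * (q * (x * p))) := by
          rw [vpxw (x * p)]
      _ = p * (v * (p * (x * p)) + v * (q * (x * p))) := by
          simp only [mul_sub, mul_add, hpw' (x * p)]; abel
      _ = p := by rw [h, hp]
  · have h := congrArg (fun t => p * (x * t)) (hsplitL p)
    simp only [mul_add] at h
    rw [hpxv' p, hp] at h
    calc (p*(x - x*w*x)*p) * (p*v*p)
        = p * (x * (p * (v * p))) - p * (x * (w * (x * (p * (v * p))))) := by
          simp only [mul_sub, sub_mul, mul_assoc, hpp']
      _ = p * (x * (p * (v * p))) - p * (x * (w * p - q * (v * p))) := by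
          rw [wxpv p]
      _ = p * (x * (p * (v * p))) + p * (x * (q * (v * p))) := by
          rw [hwp]; simp only [zero_sub, mul_neg, mul_sub, sub_neg_eq_add]
      _ = p := h
  · have hvexp : p * (v * p) + p * (v * q) + q * (v * p) + q * (v * q) = v := by
      have h := hv
      rw [show (p+q)*v*(p+q) = p*(v*p) + p*(v*q) + q*(v*p) + q*(v*q) from by noncomm_ring] at h
      exact h
    symm
    calc (p - w*x*p) * v * (p - p*x*w)
        = p*(v*p) - p*(v*(p*(x*w))) - w*(x*(p*(v*p))) + w*(x*(p*(v*(p*(x*w))))) := by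
          simp only [mul_sub, sub_mul, mul_assoc]; abel
      _ = p*(v*p) + p*(v*q) + q*(v*p) + q*(v*q) - w := by
          rw [vpxw1, wxpv p]
          simp only [mul_sub, mul_zero, sub_zero, zero_sub, sub_neg_eq_add, hpw, hwp, mul_neg]
          rw [wxpv q, hwq]
          abel
      _ = v - w := by rw [hvexp]


private theorem schur_exist (p q x w u : A)
    (hp : p * p = p) (hq : q * q = q) (hpq : p * q = 0) (hqp : q * p = 0)
    (hw_corner : q * w * q = w)
    (hw_inv_l : w * (q * x * q) = q)
    (hw_inv_r : (q * x * q) * w = q)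
    (hu : p * u * p = u)
    (hul : u * (p * (x - x * w * x) * p) = p)
    (hur : (p * (x - x * w * x) * p) * u = p) :
    (∃ v : A, (p + q) * v * (p + q) = v ∧
        v * ((p + q) * x * (p + q)) = p + q ∧
        ((p + q) * x * (p + q)) * v = p + q) := by
  have hpp' : ∀ y : A, p * (p * y) = p * y := fun y => by rw [← mul_assoc, hp]
  have hqq' : ∀ y : A, q * (q * y) = q * y := fun y => by rw [← mul_assoc, hq]
  have hpq' : ∀ y : A, p * (q * y) = 0 := fun y => by rw [← mul_assoc, hpq, zero_mul]
  have hqp' : ∀ y : A, q * (p * y) = 0 := fun y => by rw [← mul_assoc, hqp, zero_mul]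
  have hqw : q * w = w := by
    conv_lhs => rw [← hw_corner]
    rw [← mul_assoc, ← mul_assoc, hq]; exact hw_corner
  have hwq : w * q = w := by
    conv_lhs => rw [← hw_corner]
    rw [mul_assoc, hq]; exact hw_corner
  have hqw' : ∀ y : A, q * (w * y) = w * y := fun y => by rw [← mul_assoc, hqw]
  have hwq' : ∀ y : A, w * (q * y) = w * y := fun y => by rw [← mul_assoc, hwq]
  have hpw : p * w = 0 := by rw [← hqw, ← mul_assoc, hpq, zero_mul]
  have hwp : w * p = 0 := by rw [← hwq, mul_assoc, hqp, mul_zero]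
  have hpw' : ∀ y : A, p * (w * y) = 0 := fun y => by rw [← mul_assoc, hpw, zero_mul]
  have hwp' : ∀ y : A, w * (p * y) = 0 := fun y => by rw [← mul_assoc, hwp, zero_mul]
  have assoc4 : ∀ a b c y : A, a * (b * (c * y)) = (a * (b * c)) * y := fun a b c y => by
    rw [mul_assoc, mul_assoc]
  have hqxw : q * (x * w) = q := by
    rw [← hqw, ← mul_assoc, ← mul_assoc]; exact hw_inv_r
  have hwxq : w * (x * q) = q := by
    conv_lhs => rw [← hwq]
    rw [mul_assoc, ← mul_assoc q x q]; exact hw_inv_l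
  have hqxw' : ∀ y : A, q * (x * (w * y)) = q * y := fun y => by rw [assoc4, hqxw]
  have hwxq' : ∀ y : A, w * (x * (q * y)) = q * y := fun y => by rw [assoc4, hwxq]
  -- u facts
  have hpu : p * u = u := by
    conv_lhs => rw [← hu]
    rw [← mul_assoc, ← mul_assoc, hp]; exact hu
  have hup : u * p = u := by
    conv_lhs => rw [← hu]
    rw [mul_assoc, hp]; exact hu
  have hqu : q * u = 0 := by rw [← hpu, ← mul_assoc, hqp, zero_mul]
  have huq : u * q = 0 := by rw [← hup, mul_assoc, hpq, mul_zero]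
  have hpu' : ∀ y : A, p * (u * y) = u * y := fun y => by rw [← mul_assoc, hpu]
  have hup' : ∀ y : A, u * (p * y) = u * y := fun y => by rw [← mul_assoc, hup]
  have hqu' : ∀ y : A, q * (u * y) = 0 := fun y => by rw [← mul_assoc, hqu, zero_mul]
  have huq' : ∀ y : A, u * (q * y) = 0 := fun y => by rw [← mul_assoc, huq, zero_mul]
  -- key identities from the Schur-complement inverse
  have h1 : u * (x * p) - u * (x * (w * (x * p))) = p := by
    have h := hul
    rw [show u * (p*(x - x*w*x)*p) = u*(p*(x*p)) - u*(p*(x*(w*(x*p)))) from by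
      noncomm_ring, hup', hup'] at h
    exact h
  have key1 : u * (x * (w * (x * p))) = u * (x * p) - p := by
    have h2 := sub_sub_cancel (u * (x * p)) (u * (x * (w * (x * p))))
    rw [h1] at h2
    exact h2.symm
  have key1' : ∀ y : A, u * (x * (w * (x * (p * y)))) = u * (x * (p * y)) - p * y := fun y => by
    have h := congrArg (fun t => t * y) key1
    simpa [mul_assoc, sub_mul] using h
  have h2 : p * (x * u) - p * (x * (w * (x * u))) = p := by
    have h := hur
    rw [show (p*(x - x*w*x)*p) * u = p*(x*(p*u)) - p*(x*(w*(x*(p*u)))) from by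
      noncomm_ring, hpu] at h
    exact h
  have key2 : p * (x * (w * (x * u))) = p * (x * u) - p := by
    have h3 := sub_sub_cancel (p * (x * u)) (p * (x * (w * (x * u))))
    rw [h2] at h3
    exact h3.symm
  have key2' : ∀ y : A, p * (x * (w * (x * (u * y)))) = p * (x * (u * y)) - p * y := fun y => by
    have h := congrArg (fun t => t * y) key2
    simpa [mul_assoc, sub_mul] using h
  refine ⟨u + w - u * (x * w) - w * (x * u) + w * (x * (u * (x * w))), ?_, ?_, ?_⟩
  · simp only [mul_add, add_mul, mul_sub, sub_mul, mul_assoc, hpp', hqq', hpq', hqp',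
      hqw', hwq', hpw', hwp', hpu', hup', hqu', huq', hp, hq, hpq, hqp, hqw, hwq, hpw, hwp,
      hpu, hup, hqu, huq, mul_zero, zero_mul, add_zero, zero_add, sub_zero, zero_sub]
    abel
  · simp only [mul_add, add_mul, mul_sub, sub_mul, mul_assoc, hpp', hqq', hpq', hqp',
      hqw', hwq', hpw', hwp', hpu', hup', hqu', huq', hp, hq, hpq, hqp, hqw, hwq, hpw, hwp,
      hpu, hup, hqu, huq, hqxw, hqxw', hwxq, hwxq', key1, key1', key2, key2',
      mul_zero, zero_mul, add_zero, zero_add, sub_zero, zero_sub]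
    abel
  · simp only [mul_add, add_mul, mul_sub, sub_mul, mul_assoc, hpp', hqq', hpq', hqp',
      hqw', hwq', hpw', hwp', hpu', hup', hqu', huq', hp, hq, hpq, hqp, hqw, hwq, hpw, hwp,
      hpu, hup, hqu, huq, hqxw, hqxw', hwxq, hwxq', key1, key1', key2, key2',
      mul_zero, zero_mul, add_zero, zero_add, sub_zero, zero_sub]
    abel


end SchurAux

/-- Proposition 3.9 (generalized Schur complements in a C*-algebra): let `π, π⊥` be
orthogonal nonzero projections with `σ = π + π⊥`, let `x ∈ A`, and let `w` be the
`π⊥`-inverse of `x` (the inverse of `π⊥xπ⊥` in the corner algebra `π⊥Aπ⊥`).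
Then `σxσ` is invertible in `σAσ` iff the Schur complement `π(x − x·w·x)π` is
invertible in `πAπ`, and for the σ-inverse `v` of `x` one has
`π·v·π = (x − x·w·x)_π⁻¹` and `v − w = (π − w·x·π)·v·(π − π·x·w)`. -/
theorem generalized_schur_complement {A : Type*} [CStarAlgebra A]
    (π πp : A)
    (hπ_star : star π = π) (hπ_idem : π * π = π) (hπ_ne : π ≠ 0)
    (hπp_star : star πp = πp) (hπp_idem : πp * πp = πp) (hπp_ne : πp ≠ 0)
    (horth : π * πp = 0 ∧ πp * π = 0)
    (x w : A)
    (hw_corner : πp * w * πp = w)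
    (hw_inv_l : w * (πp * x * πp) = πp)
    (hw_inv_r : (πp * x * πp) * w = πp) :
    ((∃ v : A, (π + πp) * v * (π + πp) = v ∧
        v * ((π + πp) * x * (π + πp)) = π + πp ∧
        ((π + πp) * x * (π + πp)) * v = π + πp) ↔
      (∃ u : A, π * u * π = u ∧
        u * (π * (x - x * w * x) * π) = π ∧
        (π * (x - x * w * x) * π) * u = π)) ∧
    (∀ v : A, (π + πp) * v * (π + πp) = v →
      v * ((π + πp) * x * (π + πp)) = π + πp →
      ((π + πp) * x * (π + πp)) * v = π + πp →
      ((π * v * π) * (π * (x - x * w * x) * π) = π ∧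
       (π * (x - x * w * x) * π) * (π * v * π) = π ∧
       v - w = (π - w * x * π) * v * (π - π * x * w))) := by
  obtain ⟨hpq, hqp⟩ := horth
  have main := schur_main_part π πp x w hπ_idem hπp_idem hpq hqp hw_corner hw_inv_l hw_inv_r
  refine ⟨⟨?_, ?_⟩, main⟩
  · rintro ⟨v, hv, hvl, hvr⟩
    obtain ⟨hA, hB, _⟩ := main v hv hvl hvr
    refine ⟨π * v * π, ?_, hA, hB⟩
    rw [show π * (π * v * π) * π = (π * π) * v * (π * π) from by noncomm_ring, hπ_idem]
  · rintro ⟨u, hu, hul, hur⟩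
    exact schur_exist π πp x w u hπ_idem hπp_idem hpq hqp hw_corner hw_inv_l hw_inv_r hu hul hur
end

section
/- Let W^N be the N×N random real symmetric matrix of a Bai–Yin model (independent entries w(i,j), 1≤i≤j, law depending only on whether i<j, with finite fourth moments and mean zero), and assume σ = ‖w(1,2)‖₂ = 1. Fix C > 0 with ρ := ρ_C(w(1,2)) > 0, where for a mean-zero unit-variance variable Z, ρ_C(Z) = ‖Z·1_{|Z|≤C} − E[Z·1_{|Z|≤C}]‖₂ and θ_C(Z) = ‖Z·1_{|Z|>C} − E[Z·1_{|Z|>C}]‖₂. Let Ŵ^N be obtained from W^N by replacing each off-diagonal entry w by (w·1_{|w|≤C} − E[w·1_{|w|≤C}])/ρ and setting diagonal entries to 0. Then almost surely, limsup_{N→∞} ‖(W^N − Ŵ^N)/√N‖ ≤ 2(θ + 1 − ρ), where θ = θ_C(w(1,2)) and ‖·‖ is the operator norm. (One may assume the Bai–Yin theorem: the top singular value of a centered Wigner matrix divided by √N converges a.s. to twice the entry standard deviation.) -/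
open MeasureTheory ProbabilityTheory Filter

/-- Operator norm (largest singular value) of a square real matrix. -/
noncomputable def matOpNormR {N : ℕ} (M : Matrix (Fin N) (Fin N) ℝ) : ℝ :=
  ‖LinearMap.toContinuousLinearMap (Matrix.toEuclideanLin M)‖

/-- The Wigner matrix `W^N(i,j) = w(min(i,j), max(i,j))` built from the array `w`. -/
def wigMat {Ω : Type*} (w : ℕ → ℕ → Ω → ℝ) (N : ℕ) (ω : Ω) :
    Matrix (Fin N) (Fin N) ℝ :=
  Matrix.of fun i j => w (min i.1 j.1) (max i.1 j.1) ω

/-- Truncation `Z·1_{|Z|≤C}` of a random variable. -/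
noncomputable def truncPart {Ω : Type*} (C : ℝ) (f : Ω → ℝ) (ω : Ω) : ℝ :=
  if |f ω| ≤ C then f ω else 0

/-- Tail `Z·1_{|Z|>C}` of a random variable. -/
noncomputable def tailPart {Ω : Type*} (C : ℝ) (f : Ω → ℝ) (ω : Ω) : ℝ :=
  if |f ω| ≤ C then 0 else f ω

/-- `ρ_C(Z) = ‖Z·1_{|Z|≤C} − E[Z·1_{|Z|≤C}]‖₂`. -/
noncomputable def rhoC {Ω : Type*} [MeasurableSpace Ω] (μ : Measure Ω) (C : ℝ)
    (f : Ω → ℝ) : ℝ :=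
  Real.sqrt (∫ ω, (truncPart C f ω - ∫ ω', truncPart C f ω' ∂μ) ^ 2 ∂μ)

/-- `θ_C(Z) = ‖Z·1_{|Z|>C} − E[Z·1_{|Z|>C}]‖₂`. -/
noncomputable def thetaC {Ω : Type*} [MeasurableSpace Ω] (μ : Measure Ω) (C : ℝ)
    (f : Ω → ℝ) : ℝ :=
  Real.sqrt (∫ ω, (tailPart C f ω - ∫ ω', tailPart C f ω' ∂μ) ^ 2 ∂μ)

/-- The truncated, centered, renormalized matrix `Ŵ^N`: off-diagonal entries
`(w·1_{|w|≤C} − E[w·1_{|w|≤C}])/ρ`, diagonal entries `0`. -/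
noncomputable def hatMat {Ω : Type*} [MeasurableSpace Ω] (μ : Measure Ω) (C ρ : ℝ)
    (w : ℕ → ℕ → Ω → ℝ) (N : ℕ) (ω : Ω) : Matrix (Fin N) (Fin N) ℝ :=
  Matrix.of fun i j =>
    if i = j then 0 else
      (truncPart C (w (min i.1 j.1) (max i.1 j.1)) ω -
        ∫ ω', truncPart C (w (min i.1 j.1) (max i.1 j.1)) ω' ∂μ) / ρ

/-
`W − Ŵ` splits as `A + (1 − ρ⁻¹) T`, where `A` carries the diagonal of `W` and the centered tails
`w·1_{|w|>C} − E[w·1_{|w|>C}]` off the diagonal, and `T` carries the centered truncations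
`w·1_{|w|≤C} − E[w·1_{|w|≤C}]` off the diagonal; this uses `E w = 0`, so that the two centering
constants cancel. Both `A` and `T` are again Bai–Yin arrays, with off-diagonal standard deviations
`θ` and `ρ`, so `‖A‖/√N → 2θ` and `‖T‖/√N → 2ρ` almost surely. The triangle inequality then bounds
the limsup by `2θ + |1 − ρ⁻¹|·2ρ`, and `|1 − ρ⁻¹| ρ ≤ 1 − ρ` because `ρ ≤ ‖w‖₂ = 1`.
-/

section Matrix

variable {N : ℕ}

lemma matOpNormR_nonneg (A : Matrix (Fin N) (Fin N) ℝ) : 0 ≤ matOpNormR A :=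
  norm_nonneg _

lemma matOpNormR_add_le (A B : Matrix (Fin N) (Fin N) ℝ) :
    matOpNormR (A + B) ≤ matOpNormR A + matOpNormR B := by
  simp only [matOpNormR, map_add]
  exact norm_add_le _ _

lemma matOpNormR_smul (c : ℝ) (A : Matrix (Fin N) (Fin N) ℝ) :
    matOpNormR (c • A) = |c| * matOpNormR A := by
  simp only [matOpNormR, map_smul, norm_smul, Real.norm_eq_abs]

end Matrix

lemma limsup_le_add_of_tendsto {ι : Type*} {l : Filter ι} [l.NeBot] {f g h : ι → ℝ} {a b : ℝ}
    (hf : ∀ x, 0 ≤ f x) (hle : ∀ x, f x ≤ g x + h x) (hg : Tendsto g l (nhds a))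
    (hh : Tendsto h l (nhds b)) : limsup f l ≤ a + b := by
  have hgh := hg.add hh
  calc limsup f l ≤ limsup (g + h) l :=
        limsup_le_limsup (Eventually.of_forall hle)
          (isCoboundedUnder_le_of_eventually_le l (Eventually.of_forall hf))
          hgh.isBoundedUnder_le
    _ = a + b := hgh.limsup_eq

lemma abs_one_sub_inv_mul_le {ρ : ℝ} (h0 : 0 ≤ ρ) (h1 : ρ ≤ 1) : |1 - ρ⁻¹| * ρ ≤ 1 - ρ := by
  rcases h0.eq_or_lt with rfl | hpos
  · simp
  · rw [abs_of_nonpos (by linarith [one_le_inv_iff₀.2 ⟨hpos, h1⟩])]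
    field_simp
    linarith

section Truncation

variable {Ω : Type*} (C : ℝ)

lemma truncPart_add_tailPart (f : Ω → ℝ) (ω : Ω) : truncPart C f ω + tailPart C f ω = f ω := by
  unfold truncPart tailPart
  split_ifs <;> simp

lemma abs_truncPart_le (f : Ω → ℝ) (ω : Ω) : |truncPart C f ω| ≤ |f ω| := by
  unfold truncPart
  split_ifs <;> simp

lemma abs_tailPart_le (f : Ω → ℝ) (ω : Ω) : |tailPart C f ω| ≤ |f ω| := by
  unfold tailPart
  split_ifs <;> simp

variable [MeasurableSpace Ω] {μ : Measure Ω} {f : Ω → ℝ}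

lemma measurable_truncPart_id : Measurable (truncPart C (id : ℝ → ℝ)) :=
  Measurable.ite (measurableSet_le measurable_abs measurable_const) measurable_id measurable_const

lemma measurable_tailPart_id : Measurable (tailPart C (id : ℝ → ℝ)) :=
  Measurable.ite (measurableSet_le measurable_abs measurable_const) measurable_const measurable_id

lemma MeasureTheory.MemLp.truncPart {p : ENNReal} (hf : MemLp f p μ) : MemLp (truncPart C f) p μ :=
  hf.of_le ((measurable_truncPart_id C).comp_aemeasurable hf.1.aemeasurable).aestronglyMeasurable
    (ae_of_all _ (abs_truncPart_le C f))

lemma MeasureTheory.MemLp.tailPart {p : ENNReal} (hf : MemLp f p μ) : MemLp (tailPart C f) p μ :=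
  hf.of_le ((measurable_tailPart_id C).comp_aemeasurable hf.1.aemeasurable).aestronglyMeasurable
    (ae_of_all _ (abs_tailPart_le C f))

lemma integral_tailPart_eq_neg_integral_truncPart (hf : Integrable f μ)
    (h0 : ∫ ω, f ω ∂μ = 0) : ∫ ω, tailPart C f ω ∂μ = -∫ ω, truncPart C f ω ∂μ := by
  have hf1 := memLp_one_iff_integrable.2 hf
  rw [eq_neg_iff_add_eq_zero, add_comm, ← h0, ← integral_add
    (memLp_one_iff_integrable.1 (hf1.truncPart C)) (memLp_one_iff_integrable.1 (hf1.tailPart C))]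
  simp only [truncPart_add_tailPart]

lemma rhoC_le_sqrt_integral_sq [IsProbabilityMeasure μ] (hf : MemLp f 2 μ) :
    rhoC μ C f ≤ Real.sqrt (∫ ω, f ω ^ 2 ∂μ) := by
  have ht := hf.truncPart C
  refine Real.sqrt_le_sqrt ?_
  calc ∫ ω, (truncPart C f ω - ∫ ω', truncPart C f ω' ∂μ) ^ 2 ∂μ
      = variance (truncPart C f) μ := (variance_eq_integral ht.1.aemeasurable).symm
    _ ≤ ∫ ω, truncPart C f ω ^ 2 ∂μ := variance_le_expectation_sq ht.1
    _ ≤ ∫ ω, f ω ^ 2 ∂μ := integral_mono_of_nonneg (ae_of_all _ fun ω => sq_nonneg _)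
        hf.integrable_sq (ae_of_all _ fun ω => sq_le_sq.2 (abs_truncPart_le C f ω))

end Truncation

section Arrays

variable {Ω : Type*} [MeasurableSpace Ω] (μ : Measure Ω)

structure IsWignerArray (v : ℕ → ℕ → Ω → ℝ) : Prop where
  indep : iIndepFun (fun p : {q : ℕ × ℕ // q.1 ≤ q.2} => v p.1.1 p.1.2) μ
  identDistrib_off : ∀ i j : ℕ, i < j → IdentDistrib (v i j) (v 0 1) μ μ
  identDistrib_diag : ∀ i : ℕ, IdentDistrib (v i i) (v 0 0) μ μ

def BaiYinLaw : Prop :=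
  ∀ v : ℕ → ℕ → Ω → ℝ, IsWignerArray μ v →
    MemLp (v 0 0) 4 μ → MemLp (v 0 1) 4 μ →
    (∫ ω, v 0 0 ω ∂μ) = 0 → (∫ ω, v 0 1 ω ∂μ) = 0 →
    ∀ᵐ ω ∂μ, Tendsto (fun N : ℕ => matOpNormR (wigMat v N ω) / Real.sqrt N)
      atTop (nhds (2 * Real.sqrt (∫ ω', (v 0 1 ω') ^ 2 ∂μ)))

def mapEntries (d g : ℝ → ℝ) (v : ℕ → ℕ → Ω → ℝ) (i j : ℕ) (ω : Ω) : ℝ :=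
  if i = j then d (v i j ω) else g (v i j ω)

variable {μ} {d g : ℝ → ℝ} {v : ℕ → ℕ → Ω → ℝ}

omit [MeasurableSpace Ω] in
lemma mapEntries_self (i : ℕ) : mapEntries d g v i i = d ∘ v i i := by
  ext ω
  simp [mapEntries]

omit [MeasurableSpace Ω] in
lemma mapEntries_of_ne {i j : ℕ} (h : i ≠ j) : mapEntries d g v i j = g ∘ v i j := by
  ext ω
  simp [mapEntries, h]

lemma IsWignerArray.mapEntries (hv : IsWignerArray μ v) (hd : Measurable d)
    (hg : Measurable g) : IsWignerArray μ (mapEntries d g v) where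
  indep := by
    convert hv.indep.comp (fun p => if p.1.1 = p.1.2 then d else g)
      (fun p => by split <;> assumption) using 2 with p
    by_cases h : p.1.1 = p.1.2 <;> simp [h, mapEntries_self, mapEntries_of_ne]
  identDistrib_off i j hij := by
    rw [mapEntries_of_ne hij.ne, mapEntries_of_ne zero_ne_one]
    exact (hv.identDistrib_off i j hij).comp hg
  identDistrib_diag i := by
    rw [mapEntries_self, mapEntries_self]
    exact (hv.identDistrib_diag i).comp hd

end Arrays

section Decomposition

variable {Ω : Type*} [MeasurableSpace Ω] {μ : Measure Ω} (C : ℝ) {w : ℕ → ℕ → Ω → ℝ}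

lemma integral_sub_integral_self [IsProbabilityMeasure μ] {f : Ω → ℝ} (hf : Integrable f μ) :
    ∫ ω, (f ω - ∫ ω', f ω' ∂μ) ∂μ = 0 := by
  simp [integral_sub hf (integrable_const _)]

variable (μ w) in
noncomputable def centeredTailArray : ℕ → ℕ → Ω → ℝ :=
  mapEntries id (fun x => tailPart C id x - ∫ ω, tailPart C (w 0 1) ω ∂μ) w

variable (μ w) in
noncomputable def centeredTruncArray : ℕ → ℕ → Ω → ℝ :=
  mapEntries (fun _ => 0) (fun x => truncPart C id x - ∫ ω, truncPart C (w 0 1) ω ∂μ) w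

lemma wigMat_sub_hatMat (hid : ∀ i j : ℕ, i < j → IdentDistrib (w i j) (w 0 1) μ μ)
    (h1 : Integrable (w 0 1) μ) (h0 : ∫ ω, w 0 1 ω ∂μ = 0) (ρ : ℝ) (N : ℕ) (ω : Ω) :
    wigMat w N ω - hatMat μ C ρ w N ω =
      wigMat (centeredTailArray μ C w) N ω + (1 - ρ⁻¹) • wigMat (centeredTruncArray μ C w) N ω := by
  ext i j
  simp only [wigMat, hatMat, centeredTailArray, centeredTruncArray, Matrix.sub_apply,
    Matrix.add_apply, Matrix.smul_apply, Matrix.of_apply, smul_eq_mul]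
  by_cases hij : i = j
  · subst hij
    simp [mapEntries_self]
  · have hlt : min i.1 j.1 < max i.1 j.1 := by
      have := Fin.val_ne_of_ne hij
      omega
    set k := min i.1 j.1
    set l := max i.1 j.1
    have hmean : ∫ ω, truncPart C (w k l) ω ∂μ = ∫ ω, truncPart C (w 0 1) ω ∂μ :=
      ((hid k l hlt).comp (measurable_truncPart_id C)).integral_eq
    rw [if_neg hij, mapEntries_of_ne hlt.ne, mapEntries_of_ne hlt.ne, hmean,
      integral_tailPart_eq_neg_integral_truncPart C h1 h0, ← truncPart_add_tailPart C (w k l) ω]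
    simp only [Function.comp_apply]
    change _ = tailPart C (w k l) ω - _ + _ * (truncPart C (w k l) ω - _)
    ring

variable [IsProbabilityMeasure μ]

lemma BaiYinLaw.ae_tendsto_centeredTailArray (hBY : BaiYinLaw μ) (hw : IsWignerArray μ w)
    (hd4 : MemLp (w 0 0) 4 μ) (ho4 : MemLp (w 0 1) 4 μ) (hd0 : ∫ ω, w 0 0 ω ∂μ = 0) :
    ∀ᵐ ω ∂μ, Tendsto
      (fun N : ℕ => matOpNormR (wigMat (centeredTailArray μ C w) N ω) / Real.sqrt N)
      atTop (nhds (2 * thetaC μ C (w 0 1))) :=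
  hBY _ (hw.mapEntries measurable_id ((measurable_tailPart_id C).sub_const _)) hd4
    ((ho4.tailPart C).sub (memLp_const _)) hd0
    (integral_sub_integral_self ((ho4.tailPart C).integrable (by norm_num)))

lemma BaiYinLaw.ae_tendsto_centeredTruncArray (hBY : BaiYinLaw μ) (hw : IsWignerArray μ w)
    (ho4 : MemLp (w 0 1) 4 μ) :
    ∀ᵐ ω ∂μ, Tendsto
      (fun N : ℕ => matOpNormR (wigMat (centeredTruncArray μ C w) N ω) / Real.sqrt N)
      atTop (nhds (2 * rhoC μ C (w 0 1))) :=
  hBY _ (hw.mapEntries measurable_const ((measurable_truncPart_id C).sub_const _))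
    (memLp_const 0) ((ho4.truncPart C).sub (memLp_const _)) (integral_zero Ω ℝ)
    (integral_sub_integral_self ((ho4.truncPart C).integrable (by norm_num)))

end Decomposition

theorem baiYin_truncation_general {Ω : Type*} [MeasurableSpace Ω]
    (μ : Measure Ω) [IsProbabilityMeasure μ]
    (w : ℕ → ℕ → Ω → ℝ)
    (hindep : iIndepFun
      (fun p : {q : ℕ × ℕ // q.1 ≤ q.2} => w p.1.1 p.1.2) μ)
    (hid_off : ∀ i j : ℕ, i < j → IdentDistrib (w i j) (w 0 1) μ μ)
    (hid_diag : ∀ i : ℕ, IdentDistrib (w i i) (w 0 0) μ μ)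
    (hmom_d : MemLp (w 0 0) 4 μ) (hmom_o : MemLp (w 0 1) 4 μ)
    (hmean_d : ∫ ω, w 0 0 ω ∂μ = 0) (hmean_o : ∫ ω, w 0 1 ω ∂μ = 0)
    (hvar : ∫ ω, (w 0 1 ω) ^ 2 ∂μ = 1)
    (C : ℝ)
    (hBY : ∀ v : ℕ → ℕ → Ω → ℝ,
      iIndepFun
        (fun p : {q : ℕ × ℕ // q.1 ≤ q.2} => v p.1.1 p.1.2) μ →
      (∀ i j : ℕ, i < j → IdentDistrib (v i j) (v 0 1) μ μ) →
      (∀ i : ℕ, IdentDistrib (v i i) (v 0 0) μ μ) →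
      MemLp (v 0 0) 4 μ → MemLp (v 0 1) 4 μ →
      (∫ ω, v 0 0 ω ∂μ) = 0 → (∫ ω, v 0 1 ω ∂μ) = 0 →
      ∀ᵐ ω ∂μ, Tendsto (fun N : ℕ => matOpNormR (wigMat v N ω) / Real.sqrt N)
        atTop (nhds (2 * Real.sqrt (∫ ω', (v 0 1 ω') ^ 2 ∂μ)))) :
    ∀ᵐ ω ∂μ,
      Filter.limsup (fun N : ℕ =>
          matOpNormR (wigMat w N ω - hatMat μ C (rhoC μ C (w 0 1)) w N ω) /
            Real.sqrt N) atTop ≤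
        2 * (thetaC μ C (w 0 1) + 1 - rhoC μ C (w 0 1)) := by
  have hw : IsWignerArray μ w := ⟨hindep, hid_off, hid_diag⟩
  have hBY' : BaiYinLaw μ := fun v hv => hBY v hv.indep hv.identDistrib_off hv.identDistrib_diag
  set ρ := rhoC μ C (w 0 1)
  have hρ0 : 0 ≤ ρ := Real.sqrt_nonneg _
  have hρ1 : ρ ≤ 1 := by
    simpa [hvar] using rhoC_le_sqrt_integral_sq C (hmom_o.mono_exponent (by norm_num))
  filter_upwards [hBY'.ae_tendsto_centeredTailArray C hw hmom_d hmom_o hmean_d,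
    hBY'.ae_tendsto_centeredTruncArray C hw hmom_o] with ω hA hT
  calc limsup _ atTop ≤ 2 * thetaC μ C (w 0 1) + |1 - ρ⁻¹| * (2 * ρ) :=
        limsup_le_add_of_tendsto (fun N => div_nonneg (matOpNormR_nonneg _) (Real.sqrt_nonneg _))
          (fun N => ?_) hA (hT.const_mul _)
    _ ≤ 2 * (thetaC μ C (w 0 1) + 1 - ρ) := by nlinarith [abs_one_sub_inv_mul_le hρ0 hρ1]
  rw [wigMat_sub_hatMat C hid_off (hmom_o.integrable (by norm_num)) hmean_o, mul_div_assoc',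
    ← matOpNormR_smul, ← add_div]
  exact div_le_div_of_nonneg_right (matOpNormR_add_le _ _) (Real.sqrt_nonneg _)

/-- Lemma 2.7 (truncation approximation in the Bai–Yin model): let `w` be a Bai–Yin
array (independent entries, law depending only on whether `i < j`, mean zero, finite
fourth moments) with `σ = ‖w(0,1)‖₂ = 1`, and let `C > 0` satisfy `ρ = ρ_C(w(0,1)) > 0`.
Assuming the Bai–Yin theorem (as the hypothesis `hBY`: for every Bai–Yin array `v`,
almost surely `‖V^N‖/√N → 2·√(E[v(0,1)²])` in operator norm), one has, almost surely,
`limsup_N ‖(W^N − Ŵ^N)/√N‖ ≤ 2(θ + 1 − ρ)` where `θ = θ_C(w(0,1))`. -/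
theorem baiYin_truncation {Ω : Type*} [MeasurableSpace Ω]
    (μ : Measure Ω) [IsProbabilityMeasure μ]
    (w : ℕ → ℕ → Ω → ℝ)
    (hindep : iIndepFun
      (fun p : {q : ℕ × ℕ // q.1 ≤ q.2} => w p.1.1 p.1.2) μ)
    (hid_off : ∀ i j : ℕ, i < j → IdentDistrib (w i j) (w 0 1) μ μ)
    (hid_diag : ∀ i : ℕ, IdentDistrib (w i i) (w 0 0) μ μ)
    (hmom_d : MemLp (w 0 0) 4 μ) (hmom_o : MemLp (w 0 1) 4 μ)
    (hmean_d : ∫ ω, w 0 0 ω ∂μ = 0) (hmean_o : ∫ ω, w 0 1 ω ∂μ = 0)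
    (hvar : ∫ ω, (w 0 1 ω) ^ 2 ∂μ = 1)
    (C : ℝ) (hC : 0 < C) (hρ : 0 < rhoC μ C (w 0 1))
    (hBY : ∀ v : ℕ → ℕ → Ω → ℝ,
      iIndepFun
        (fun p : {q : ℕ × ℕ // q.1 ≤ q.2} => v p.1.1 p.1.2) μ →
      (∀ i j : ℕ, i < j → IdentDistrib (v i j) (v 0 1) μ μ) →
      (∀ i : ℕ, IdentDistrib (v i i) (v 0 0) μ μ) →
      MemLp (v 0 0) 4 μ → MemLp (v 0 1) 4 μ →
      (∫ ω, v 0 0 ω ∂μ) = 0 → (∫ ω, v 0 1 ω ∂μ) = 0 →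
      ∀ᵐ ω ∂μ, Tendsto (fun N : ℕ => matOpNormR (wigMat v N ω) / Real.sqrt N)
        atTop (nhds (2 * Real.sqrt (∫ ω', (v 0 1 ω') ^ 2 ∂μ)))) :
    ∀ᵐ ω ∂μ,
      Filter.limsup (fun N : ℕ =>
          matOpNormR (wigMat w N ω - hatMat μ C (rhoC μ C (w 0 1)) w N ω) /
            Real.sqrt N) atTop ≤
        2 * (thetaC μ C (w 0 1) + 1 - rhoC μ C (w 0 1)) :=
  baiYin_truncation_general μ w hindep hid_off hid_diag hmom_d hmom_o hmean_d hmean_o hvar C hBY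
end
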